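/- arXiv:2312.17299 — 2 statements merged into one kernel-verified Lean document; each statement's English description precedes it below -/
import Mathlib

section
/- Let R be a ring and S a multiplicative subset of R generated by normal elements; set 𝔞 := { r ∈ R | srt = 0 for some s, t ∈ S }, let π : R → R̄ := R/𝔞 and S̄ := π(S), so that S̄ is a (left and right) denominator set of R̄ with ass(S̄) = 0. Assume the set min(𝔞) of primes of R minimal over 𝔞 is finite and the prime radical 𝔫_{R̄} of R̄ is a nilpotent ideal (e.g. R is a one-sided Noetherian ring). Then: (1) the map min(𝔞) → min(S̄⁻¹R̄), 𝔭 ↦ S̄⁻¹π(𝔭), is a bijection, i.e. min(R⟨S⁻¹⟩) = { S̄⁻¹π(𝔭) | 𝔭 ∈ min(𝔞) }; (2) S̄⁻¹𝔫_{R̄} = 𝔫_{S̄⁻¹R̄}, and S̄⁻¹R̄ / S̄⁻¹𝔫_{R̄} ≅ S̄⁻¹R̄ / 𝔫_{S̄⁻¹R̄} ≅ S̃⁻¹R̃, where S̃ is the image of S̄ in R̃ := R̄/𝔫_{R̄} and is a denominator set of R̃ with zero assassinator. -/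
/- Common framework: two-sided ideals, prime ideals, denominator sets and
   left localizations of (possibly noncommutative) rings, described
   axiomatically via their characteristic properties. -/

namespace BavulaMinPrimes

/-- A subset of a ring is a two-sided ideal. -/
def IsIdealSet {R : Type*} [Ring R] (I : Set R) : Prop :=
  (0 : R) ∈ I ∧ (∀ a ∈ I, ∀ b ∈ I, a + b ∈ I) ∧ (∀ a ∈ I, -a ∈ I) ∧
    ∀ a ∈ I, ∀ r : R, r * a ∈ I ∧ a * r ∈ I

/-- A (two-sided) prime ideal: a proper ideal `P` such that `A * B ⊆ P`
implies `A ⊆ P` or `B ⊆ P` for all ideals `A`, `B`. -/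
def IsPrimeIdealSet {R : Type*} [Ring R] (P : Set R) : Prop :=
  IsIdealSet P ∧ P ≠ Set.univ ∧
    ∀ A B : Set R, IsIdealSet A → IsIdealSet B →
      (∀ a ∈ A, ∀ b ∈ B, a * b ∈ P) → A ⊆ P ∨ B ⊆ P

/-- A completely prime ideal: the factor ring is a domain. -/
def IsCompletelyPrimeIdealSet {R : Type*} [Ring R] (P : Set R) : Prop :=
  IsIdealSet P ∧ P ≠ Set.univ ∧ ∀ a b : R, a * b ∈ P → a ∈ P ∨ b ∈ P

/-- A minimal prime ideal of a ring. -/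
def IsMinimalPrimeIdealSet {R : Type*} [Ring R] (P : Set R) : Prop :=
  IsPrimeIdealSet P ∧ ∀ P' : Set R, IsPrimeIdealSet P' → P' ⊆ P → P' = P

/-- A prime minimal over an ideal `A`. -/
def IsMinimalPrimeOver {R : Type*} [Ring R] (A P : Set R) : Prop :=
  IsPrimeIdealSet P ∧ A ⊆ P ∧
    ∀ P' : Set R, IsPrimeIdealSet P' → A ⊆ P' → P' ⊆ P → P' = P

/-- The set `min(R)` of minimal primes of `R`. -/
def minPrimes (R : Type*) [Ring R] : Set (Set R) := { P | IsMinimalPrimeIdealSet P }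

/-- The prime radical: intersection of all prime ideals. -/
def primeRadicalSet (R : Type*) [Ring R] : Set R :=
  { r : R | ∀ P : Set R, IsPrimeIdealSet P → r ∈ P }

/-- A ring is semiprime if its prime radical is zero. -/
def IsSemiprimeRing (R : Type*) [Ring R] : Prop := primeRadicalSet R = {0}

/-- A ring is prime if its zero ideal is a prime ideal. -/
def IsPrimeRing (R : Type*) [Ring R] : Prop := IsPrimeIdealSet ({0} : Set R)

/-- A multiplicative subset: `1 ∈ S`, `0 ∉ S`, closed under multiplication. -/
def IsMulSet {R : Type*} [Ring R] (S : Set R) : Prop :=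
  (1 : R) ∈ S ∧ (0 : R) ∉ S ∧ ∀ s ∈ S, ∀ t ∈ S, s * t ∈ S

/-- The left Ore condition: `S r ∩ R s ≠ ∅`. -/
def LeftOre {R : Type*} [Ring R] (S : Set R) : Prop :=
  ∀ r : R, ∀ s ∈ S, ∃ s' ∈ S, ∃ r' : R, s' * r = r' * s

/-- The right Ore condition: `r S ∩ s R ≠ ∅`. -/
def RightOre {R : Type*} [Ring R] (S : Set R) : Prop :=
  ∀ r : R, ∀ s ∈ S, ∃ s' ∈ S, ∃ r' : R, r * s' = s * r'

/-- A left denominator set: a left Ore multiplicative set such that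
`r s = 0` (with `s ∈ S`) implies `t r = 0` for some `t ∈ S`. -/
def IsLeftDenominatorSet {R : Type*} [Ring R] (S : Set R) : Prop :=
  IsMulSet S ∧ LeftOre S ∧ ∀ r : R, ∀ s ∈ S, r * s = 0 → ∃ t ∈ S, t * r = 0

/-- A right denominator set. -/
def IsRightDenominatorSet {R : Type*} [Ring R] (S : Set R) : Prop :=
  IsMulSet S ∧ RightOre S ∧ ∀ r : R, ∀ s ∈ S, s * r = 0 → ∃ t ∈ S, r * t = 0

/-- `ass_l(S) = { r | s r = 0 for some s ∈ S }`. -/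
def lAss {R : Type*} [Ring R] (S : Set R) : Set R := { r : R | ∃ s ∈ S, s * r = 0 }

/-- `f : R →+* Q` realizes `Q` as the left localization `S⁻¹R`:
elements of `S` become units, every element of `Q` is a left fraction
`(f s)⁻¹ (f r)`, and the kernel of `f` is `ass_l(S)`.  These properties
characterize `S⁻¹R` up to a unique `R`-isomorphism. -/
structure IsLeftLocalization {R Q : Type*} [Ring R] [Ring Q]
    (S : Set R) (f : R →+* Q) : Prop where
  isUnit : ∀ s ∈ S, IsUnit (f s)
  surj : ∀ q : Q, ∃ s ∈ S, ∃ r : R, f s * q = f r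
  ker : ∀ r : R, f r = 0 ↔ r ∈ lAss S

/-- `S⁻¹I = { s⁻¹ a | s ∈ S, a ∈ I }` as a subset of the localization `Q`:
`q ∈ S⁻¹I` iff `f s * q = f a` for some `s ∈ S`, `a ∈ I`. -/
def locSet {R Q : Type*} [Ring R] [Ring Q] (f : R →+* Q) (S : Set R)
    (I : Set R) : Set Q :=
  { q : Q | ∃ s ∈ S, ∃ a ∈ I, f s * q = f a }

/-- A normal element: `R n = n R`. -/
def IsNormalElement {R : Type*} [Ring R] (n : R) : Prop :=
  (∀ r : R, ∃ r' : R, r * n = n * r') ∧ ∀ r : R, ∃ r' : R, n * r = r' * n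

/-- A prime rich ring: every ideal contains a finite product of prime ideals
containing it (the empty product being the whole ring). -/
def IsPrimeRich (R : Type*) [Ring R] : Prop :=
  ∀ A : Set R, IsIdealSet A →
    ∃ (n : ℕ) (P : Fin n → Set R),
      (∀ i, IsPrimeIdealSet (P i) ∧ A ⊆ P i) ∧
      ∀ x : Fin n → R, (∀ i, x i ∈ P i) → (List.ofFn x).prod ∈ A

/-- An ideal which is finitely generated as a right `R`-module. -/
def IsFGRightIdeal {R : Type*} [Ring R] (I : Set R) : Prop :=
  ∃ (m : ℕ) (g : Fin m → R), (∀ i, g i ∈ I) ∧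
    ∀ x ∈ I, ∃ c : Fin m → R, x = ∑ i, g i * c i

/-- `𝔞 = { r ∈ R | s r t = 0 for some s, t ∈ S }`. -/
def twoSidedAss {R : Type*} [Ring R] (S : Set R) : Set R :=
  { r : R | ∃ s ∈ S, ∃ t ∈ S, s * r * t = 0 }

/-! Write `T` for the image of `S` in `R̄`: normal elements, left regular since `ass(S̄) = 0`.
For `t ∈ T` the ideal `J = {x | t x ∈ 𝔫}` satisfies `t J ⊆ J t`, so `tᵏ Jᵏ ⊆ (t J)ᵏ ⊆ 𝔫ᵏ = 0`,
and regularity of `t` gives `J ⊆ 𝔫`: `t x ∈ 𝔫` forces `x ∈ 𝔫`. If `t` lay in a minimal prime `𝔭`,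
the intersection of the minimal primes avoiding `t` would be killed into `𝔫 ⊆ 𝔭` by `t`, and prime
avoidance would put one of them inside `𝔭`. So `𝔫` and the minimal primes are `T`-saturated:
their extensions are ideals of `T⁻¹R̄` contracting back to them, the extended minimal primes are
prime, and `T⁻¹𝔫 = ⋂ T⁻¹𝔭` is nilpotent. Every prime of `T⁻¹R̄` thus contains some `T⁻¹𝔭`, which
yields `min(T⁻¹R̄)` and `𝔫_{T⁻¹R̄} = T⁻¹𝔫`; transporting along `R → R̄` gives `min(𝔞)`. Finally
`T` stays regular modulo `𝔫`, and the universal property of the Ore localization maps `T⁻¹R̄`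
onto `T̃⁻¹R̃` with kernel `T⁻¹𝔫`. -/

section Ideals

variable {R : Type*} [Ring R]

theorem IsIdealSet.zero_mem {I : Set R} (h : IsIdealSet I) : (0 : R) ∈ I := h.1

theorem IsIdealSet.add_mem {I : Set R} (h : IsIdealSet I) {a b : R} (ha : a ∈ I) (hb : b ∈ I) :
    a + b ∈ I := h.2.1 a ha b hb

theorem IsIdealSet.neg_mem {I : Set R} (h : IsIdealSet I) {a : R} (ha : a ∈ I) : -a ∈ I :=
  h.2.2.1 a ha

theorem IsIdealSet.mul_mem_left {I : Set R} (h : IsIdealSet I) (r : R) {a : R} (ha : a ∈ I) :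
    r * a ∈ I := (h.2.2.2 a ha r).1

theorem IsIdealSet.mul_mem_right {I : Set R} (h : IsIdealSet I) {a : R} (ha : a ∈ I) (r : R) :
    a * r ∈ I := (h.2.2.2 a ha r).2

theorem isIdealSet_sInter {E : Set (Set R)} (h : ∀ I ∈ E, IsIdealSet I) : IsIdealSet (⋂₀ E) :=
  ⟨fun I hI => (h I hI).zero_mem,
    fun _ ha _ hb I hI => (h I hI).add_mem (ha I hI) (hb I hI),
    fun _ ha I hI => (h I hI).neg_mem (ha I hI),
    fun _ ha r => ⟨fun I hI => (h I hI).mul_mem_left r (ha I hI),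
      fun I hI => (h I hI).mul_mem_right (ha I hI) r⟩⟩

theorem isIdealSet_primeRadicalSet : IsIdealSet (primeRadicalSet R) :=
  isIdealSet_sInter (E := {P | IsPrimeIdealSet P}) fun _ hP => hP.1

theorem IsPrimeIdealSet.one_not_mem {P : Set R} (hP : IsPrimeIdealSet P) : (1 : R) ∉ P :=
  fun h1 => hP.2.1 <| Set.eq_univ_of_forall fun x => by simpa using hP.1.mul_mem_left x h1

theorem IsPrimeIdealSet.mem_or_mem {P : Set R} (hP : IsPrimeIdealSet P) {a b : R}
    (h : ∀ r, a * r * b ∈ P) : a ∈ P ∨ b ∈ P := by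
  set X : Set R := {x | ∀ r, x * r * b ∈ P}
  set Y : Set R := {y | ∀ x ∈ X, x * y ∈ P}
  have hX : IsIdealSet X := by
    refine ⟨fun r => by simpa using hP.1.zero_mem, fun x hx y hy r => ?_,
      fun x hx r => ?_, fun x hx s => ⟨fun r => ?_, fun r => ?_⟩⟩
    · simpa [add_mul] using hP.1.add_mem (hx r) (hy r)
    · simpa using hP.1.neg_mem (hx r)
    · simpa [mul_assoc] using hP.1.mul_mem_left s (hx r)
    · simpa [mul_assoc] using hx (s * r)
  have hY : IsIdealSet Y := by
    refine ⟨fun x _ => by simpa using hP.1.zero_mem, fun y hy z hz x hx => ?_,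
      fun y hy x hx => ?_, fun y hy s => ⟨fun x hx => ?_, fun x hx => ?_⟩⟩
    · simpa [mul_add] using hP.1.add_mem (hy x hx) (hz x hx)
    · simpa using hP.1.neg_mem (hy x hx)
    · simpa [mul_assoc] using hy (x * s) fun r => by simpa [mul_assoc] using hx (s * r)
    · simpa [mul_assoc] using hP.1.mul_mem_right (hy x hx) s
  rcases hP.2.2 X Y hX hY fun x hx y hy => hy x hx with hXP | hYP
  · exact Or.inl (hXP h)
  · exact Or.inr (hYP fun x hx => by simpa using hx 1)

theorem IsPrimeIdealSet.exists_prod_not_mem {P : Set R} (hP : IsPrimeIdealSet P) :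
    ∀ {n : ℕ} (J : Fin n → Set R), (∀ i, IsIdealSet (J i)) → (∀ i, ¬J i ⊆ P) →
      ∃ x : Fin n → R, (∀ i, x i ∈ J i) ∧ (List.ofFn x).prod ∉ P
  | 0, _, _, _ => ⟨Fin.elim0, fun i => i.elim0, by simpa using hP.one_not_mem⟩
  | n + 1, J, hJ, hJP => by
    obtain ⟨y, hyJ, hyP⟩ := hP.exists_prod_not_mem (fun i => J i.succ) (fun i => hJ _)
      fun i => hJP _
    obtain ⟨x₀, hx₀J, hx₀P⟩ := Set.not_subset.mp (hJP 0)
    obtain ⟨r, hr⟩ : ∃ r, x₀ * r * (List.ofFn y).prod ∉ P := by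
      by_contra! h
      exact (hP.mem_or_mem h).elim hx₀P hyP
    refine ⟨Fin.cons (x₀ * r) y, Fin.cases ((hJ 0).mul_mem_right hx₀J r) hyJ, ?_⟩
    simpa [List.ofFn_succ] using hr

theorem IsPrimeIdealSet.exists_subset_of_prod_mem {P : Set R} (hP : IsPrimeIdealSet P)
    {n : ℕ} (J : Fin n → Set R) (hJ : ∀ i, IsIdealSet (J i))
    (h : ∀ x : Fin n → R, (∀ i, x i ∈ J i) → (List.ofFn x).prod ∈ P) : ∃ i, J i ⊆ P := by
  by_contra! hJP
  obtain ⟨x, hxJ, hxP⟩ := hP.exists_prod_not_mem J hJ hJP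
  exact hxP (h x hxJ)

theorem IsPrimeIdealSet.exists_subset_of_sInter_subset {P : Set R} (hP : IsPrimeIdealSet P)
    {E : Set (Set R)} (hE : E.Finite) (hEI : ∀ I ∈ E, IsIdealSet I) (h : ⋂₀ E ⊆ P) :
    ∃ I ∈ E, I ⊆ P := by
  induction E, hE using Set.Finite.induction_on with
  | empty => exact absurd (Set.univ_subset_iff.mp (by simpa using h)) hP.2.1
  | @insert I E _ _ ih =>
    have hI := hEI I (Set.mem_insert _ _)
    have hE' : ∀ J ∈ E, IsIdealSet J := fun J hJ => hEI J (Set.mem_insert_of_mem _ hJ)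
    have hprod : ∀ a ∈ I, ∀ b ∈ ⋂₀ E, a * b ∈ P := fun a ha b hb =>
      h <| Set.sInter_insert I E ▸
        ⟨hI.mul_mem_right ha b, (isIdealSet_sInter hE').mul_mem_left a hb⟩
    rcases hP.2.2 _ _ hI (isIdealSet_sInter hE') hprod with hIP | hEP
    · exact ⟨I, Set.mem_insert _ _, hIP⟩
    · obtain ⟨J, hJ, hJP⟩ := ih hE' hEP
      exact ⟨J, Set.mem_insert_of_mem _ hJ, hJP⟩

end Ideals

section MinimalPrimes

variable {R : Type*} [Ring R]

/-- `I ^ k = 0`. -/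
def IsNilpotentSet (I : Set R) (k : ℕ) : Prop :=
  ∀ x : Fin k → R, (∀ i, x i ∈ I) → (List.ofFn x).prod = 0

theorem IsNilpotentSet.subset_primeRadicalSet {I : Set R} {k : ℕ} (hI : IsIdealSet I)
    (hk : IsNilpotentSet I k) : I ⊆ primeRadicalSet R := fun _ ha P hP => by
  obtain ⟨_, hIP⟩ := hP.exists_subset_of_prod_mem (fun _ : Fin k => I) (fun _ => hI)
    fun x hx => hk x hx ▸ hP.1.zero_mem
  exact hIP ha

theorem isPrimeIdealSet_sInter_of_isChain {c : Set (Set R)} (hc : IsChain (· ⊆ ·) c)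
    (hne : c.Nonempty) (hprime : ∀ P ∈ c, IsPrimeIdealSet P) : IsPrimeIdealSet (⋂₀ c) := by
  obtain ⟨P₀, hP₀⟩ := hne
  refine ⟨isIdealSet_sInter fun P hP => (hprime P hP).1, fun h => ?_, fun X Y hX hY hXY => ?_⟩
  · exact (hprime P₀ hP₀).one_not_mem ((h ▸ Set.mem_univ (1 : R) : (1 : R) ∈ ⋂₀ c) P₀ hP₀)
  by_contra! hXYc
  obtain ⟨⟨x, hxX, hxc⟩, ⟨y, hyY, hyc⟩⟩ := And.imp Set.not_subset.mp Set.not_subset.mp hXYc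
  obtain ⟨P₁, hP₁, hxP₁⟩ := by simpa only [Set.mem_sInter, not_forall, exists_prop] using hxc
  obtain ⟨P₂, hP₂, hyP₂⟩ := by simpa only [Set.mem_sInter, not_forall, exists_prop] using hyc
  have key : ∀ P ∈ c, x ∉ P → y ∉ P → False := fun P hP hx hy =>
    ((hprime P hP).2.2 X Y hX hY fun a ha b hb => hXY a ha b hb P hP).elim
      (fun h => hx (h hxX)) (fun h => hy (h hyY))
  rcases hc.total hP₁ hP₂ with h12 | h21
  · exact key P₁ hP₁ hxP₁ fun h => hyP₂ (h12 h)
  · exact key P₂ hP₂ (fun h => hxP₁ (h21 h)) hyP₂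

theorem exists_minPrimes_subset {P : Set R} (hP : IsPrimeIdealSet P) :
    ∃ p ∈ minPrimes R, p ⊆ P := by
  obtain ⟨m, -, hm⟩ := zorn_superset_nonempty {Q : Set R | IsPrimeIdealSet Q ∧ Q ⊆ P}
    (fun c hcS hc hne => ⟨⋂₀ c,
      ⟨isPrimeIdealSet_sInter_of_isChain hc hne fun Q hQ => (hcS hQ).1,
        (Set.sInter_subset_of_mem hne.some_mem).trans (hcS hne.some_mem).2⟩,
      fun _ hs => Set.sInter_subset_of_mem hs⟩) P ⟨hP, subset_rfl⟩
  exact ⟨m, ⟨hm.prop.1, fun Q hQ hQm => hm.eq_of_subset ⟨hQ, hQm.trans hm.prop.2⟩ hQm⟩,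
    hm.prop.2⟩

theorem primeRadicalSet_eq_sInter_minPrimes : primeRadicalSet R = ⋂₀ minPrimes R := by
  ext x
  refine ⟨fun hx p hp => hx p hp.1, fun hx P hP => ?_⟩
  obtain ⟨p, hp, hpP⟩ := exists_minPrimes_subset hP
  exact hpP (hx p hp)

end MinimalPrimes

section Surjective

variable {R A : Type*} [Ring R] [Ring A] {g : R →+* A}

theorem IsIdealSet.preimage {J : Set A} (hJ : IsIdealSet J) : IsIdealSet (g ⁻¹' J) := by
  refine ⟨?_, fun a ha b hb => ?_, fun a ha => ?_, fun a ha r => ⟨?_, ?_⟩⟩ <;>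
    simp only [Set.mem_preimage, map_zero, map_add, map_neg, map_mul] at *
  exacts [hJ.zero_mem, hJ.add_mem ha hb, hJ.neg_mem ha, hJ.mul_mem_left _ ha,
    hJ.mul_mem_right ha _]

theorem IsIdealSet.image (hg : Function.Surjective g) {I : Set R} (hI : IsIdealSet I) :
    IsIdealSet (g '' I) := by
  refine ⟨⟨0, hI.zero_mem, map_zero g⟩, ?_, ?_, ?_⟩
  · rintro _ ⟨x, hx, rfl⟩ _ ⟨y, hy, rfl⟩
    exact ⟨x + y, hI.add_mem hx hy, map_add g x y⟩
  · rintro _ ⟨x, hx, rfl⟩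
    exact ⟨-x, hI.neg_mem hx, map_neg g x⟩
  · rintro _ ⟨x, hx, rfl⟩ b
    obtain ⟨r, rfl⟩ := hg b
    exact ⟨⟨r * x, hI.mul_mem_left r hx, map_mul g r x⟩,
      ⟨x * r, hI.mul_mem_right hx r, map_mul g x r⟩⟩

theorem IsIdealSet.preimage_image {I : Set R} (hI : IsIdealSet I)
    (hker : ∀ r, g r = 0 → r ∈ I) : g ⁻¹' (g '' I) = I := by
  refine subset_antisymm (fun x ⟨y, hy, hyx⟩ => ?_) (Set.subset_preimage_image g I)
  simpa using hI.add_mem (hker (x - y) (by rw [map_sub, hyx, sub_self])) hy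

theorem IsPrimeIdealSet.preimage (hg : Function.Surjective g) {P : Set A}
    (hP : IsPrimeIdealSet P) : IsPrimeIdealSet (g ⁻¹' P) := by
  refine ⟨hP.1.preimage, fun h => hP.one_not_mem ?_, fun X Y hX hY hXY => ?_⟩
  · simpa using (h ▸ Set.mem_univ (1 : R) : (1 : R) ∈ g ⁻¹' P)
  have himage : ∀ a ∈ g '' X, ∀ b ∈ g '' Y, a * b ∈ P := by
    rintro _ ⟨x, hx, rfl⟩ _ ⟨y, hy, rfl⟩
    simpa using hXY x hx y hy
  exact (hP.2.2 _ _ (hX.image hg) (hY.image hg) himage).imp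
    (fun h x hx => h ⟨x, hx, rfl⟩) (fun h y hy => h ⟨y, hy, rfl⟩)

theorem IsPrimeIdealSet.image (hg : Function.Surjective g) {P : Set R} (hP : IsPrimeIdealSet P)
    (hker : ∀ r, g r = 0 → r ∈ P) : IsPrimeIdealSet (g '' P) := by
  have hpre := hP.1.preimage_image hker
  refine ⟨hP.1.image hg, fun h => hP.one_not_mem ?_, fun X Y hX hY hXY => ?_⟩
  · rw [← hpre, h]
    trivial
  have hpreXY : ∀ a ∈ g ⁻¹' X, ∀ b ∈ g ⁻¹' Y, a * b ∈ P := fun a ha b hb => by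
    rw [← hpre]
    simpa using hXY _ ha _ hb
  exact (hP.2.2 _ _ hX.preimage hY.preimage hpreXY).imp
    (fun h => Set.image_preimage_eq X hg ▸ Set.image_mono h)
    (fun h => Set.image_preimage_eq Y hg ▸ Set.image_mono h)

theorem IsNormalElement.map (hg : Function.Surjective g) {n : R} (hn : IsNormalElement n) :
    IsNormalElement (g n) := by
  refine ⟨fun b => ?_, fun b => ?_⟩ <;> obtain ⟨r, rfl⟩ := hg b
  · obtain ⟨r', hr'⟩ := hn.1 r
    exact ⟨g r', by rw [← map_mul, ← map_mul, hr']⟩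
  · obtain ⟨r', hr'⟩ := hn.2 r
    exact ⟨g r', by rw [← map_mul, ← map_mul, hr']⟩

variable {𝔞 : Set R}

theorem IsMinimalPrimeOver.image_mem_minPrimes (hg : Function.Surjective g)
    (hker : ∀ r, g r = 0 ↔ r ∈ 𝔞) {p : Set R} (hp : IsMinimalPrimeOver 𝔞 p) :
    g '' p ∈ minPrimes A := by
  have hkerp : ∀ r, g r = 0 → r ∈ p := fun r hr => hp.2.1 ((hker r).mp hr)
  refine ⟨hp.1.image hg hkerp, fun P hP hPp => ?_⟩
  have h𝔞P : 𝔞 ⊆ g ⁻¹' P := fun r hr => by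
    simpa [(hker r).mpr hr] using hP.1.zero_mem
  have hPp' : g ⁻¹' P ⊆ p := hp.1.1.preimage_image hkerp ▸ Set.preimage_mono hPp
  rw [← Set.image_preimage_eq P hg, hp.2.2 _ (hP.preimage hg) h𝔞P hPp']

theorem isMinimalPrimeOver_preimage (hg : Function.Surjective g) (hker : ∀ r, g r = 0 ↔ r ∈ 𝔞)
    {P : Set A} (hP : P ∈ minPrimes A) :
    IsMinimalPrimeOver 𝔞 (g ⁻¹' P) := by
  refine ⟨hP.1.preimage hg, fun r hr => ?_, fun p hp h𝔞p hpP => ?_⟩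
  · simpa [(hker r).mpr hr] using hP.1.1.zero_mem
  have hkerp : ∀ r, g r = 0 → r ∈ p := fun r hr => h𝔞p ((hker r).mp hr)
  have hgp : g '' p = P :=
    hP.2 _ (hp.image hg hkerp) (Set.image_subset_iff.mpr hpP)
  rw [← hgp, hp.1.preimage_image hkerp]

theorem minPrimes_eq_image_of_surjective (hg : Function.Surjective g)
    (hker : ∀ r, g r = 0 ↔ r ∈ 𝔞) :
    minPrimes A = (g '' ·) '' {p | IsMinimalPrimeOver 𝔞 p} := by
  refine subset_antisymm (fun P hP => ?_) ?_
  · exact ⟨g ⁻¹' P, isMinimalPrimeOver_preimage hg hker hP, Set.image_preimage_eq P hg⟩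
  · rintro _ ⟨p, hp, rfl⟩
    exact hp.image_mem_minPrimes hg hker

theorem injOn_image_minimalPrimeOver (hker : ∀ r, g r = 0 ↔ r ∈ 𝔞) :
    Set.InjOn (g '' ·) {p | IsMinimalPrimeOver 𝔞 p} := by
  intro p₁ hp₁ p₂ hp₂ h
  have hpre : ∀ p, IsMinimalPrimeOver 𝔞 p → g ⁻¹' (g '' p) = p := fun p hp =>
    hp.1.1.preimage_image fun r hr => hp.2.1 ((hker r).mp hr)
  rw [← hpre p₁ hp₁, ← hpre p₂ hp₂]
  exact congrArg _ h

end Surjective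

section NormalElements

variable {R : Type*} [Ring R] {t : R}

theorem IsPrimeIdealSet.mem_of_mul_mem_left {P : Set R} (hP : IsPrimeIdealSet P)
    (ht : IsNormalElement t) (htP : t ∉ P) {a : R} (h : t * a ∈ P) : a ∈ P :=
  (hP.mem_or_mem fun r => by
    obtain ⟨r', hr'⟩ := ht.2 r
    simpa [hr', mul_assoc] using hP.1.mul_mem_left r' h).resolve_left htP

theorem IsPrimeIdealSet.mul_mem_comm {P : Set R} (hP : IsPrimeIdealSet P)
    (ht : IsNormalElement t) {x : R} (h : x * t ∈ P) : t * x ∈ P := by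
  refine (hP.mem_or_mem (a := t * x) (b := t) fun r => ?_).elim id
    fun htP => hP.1.mul_mem_right htP x
  obtain ⟨r', hr'⟩ := ht.1 r
  simpa [hr', mul_assoc] using hP.1.mul_mem_right (hP.1.mul_mem_left t h) r'

theorem mul_mem_primeRadicalSet_comm (ht : IsNormalElement t) {x : R}
    (h : x * t ∈ primeRadicalSet R) : t * x ∈ primeRadicalSet R :=
  fun P hP => hP.mul_mem_comm ht (h P hP)

theorem exists_pow_mul_eq_mul_pow {J : Set R} (hJ : ∀ y ∈ J, ∃ x ∈ J, t * y = x * t) :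
    ∀ (m : ℕ), ∀ y ∈ J, ∃ x ∈ J, t ^ m * y = x * t ^ m
  | 0, y, hy => ⟨y, hy, by simp⟩
  | m + 1, y, hy => by
    obtain ⟨x, hx, hxy⟩ := exists_pow_mul_eq_mul_pow hJ m y hy
    obtain ⟨x', hx', hx'x⟩ := hJ x hx
    exact ⟨x', hx', by rw [pow_succ', mul_assoc, hxy, ← mul_assoc, hx'x, mul_assoc, ← pow_succ']⟩

theorem exists_pow_mul_prod_eq {J : Set R} (hJ : ∀ y ∈ J, ∃ x ∈ J, t * y = x * t) :
    ∀ {m : ℕ} (y : Fin m → R), (∀ i, y i ∈ J) →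
      ∃ x : Fin m → R, (∀ i, x i ∈ J) ∧
        t ^ m * (List.ofFn y).prod = (List.ofFn fun i => t * x i).prod
  | 0, _, _ => ⟨Fin.elim0, fun i => i.elim0, by simp⟩
  | m + 1, y, hy => by
    obtain ⟨x, hx, hxy⟩ := exists_pow_mul_prod_eq hJ (fun i => y i.succ) fun i => hy _
    obtain ⟨x₀, hx₀, hx₀y⟩ := exists_pow_mul_eq_mul_pow hJ m (y 0) (hy 0)
    refine ⟨Fin.cons x₀ x, Fin.cases hx₀ hx, ?_⟩
    simp only [List.ofFn_succ, List.prod_cons, Fin.cons_zero, Fin.cons_succ]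
    rw [← hxy, pow_succ', mul_assoc, ← mul_assoc _ (y 0), hx₀y]
    simp only [mul_assoc]

theorem IsNormalElement.mem_primeRadicalSet_of_mul_mem (ht : IsNormalElement t)
    (hreg : IsLeftRegular t) {k : ℕ} (hN : IsNilpotentSet (primeRadicalSet R) k) {a : R}
    (h : t * a ∈ primeRadicalSet R) : a ∈ primeRadicalSet R := by
  set J : Set R := {x | t * x ∈ primeRadicalSet R}
  have hN' := isIdealSet_primeRadicalSet (R := R)
  have hJ : IsIdealSet J := by
    refine ⟨by simpa [J] using hN'.zero_mem, fun x hx y hy => ?_, fun x hx => ?_,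
      fun x hx r => ⟨?_, ?_⟩⟩
    · simpa [J, mul_add] using hN'.add_mem hx hy
    · simpa [J] using hN'.neg_mem hx
    · obtain ⟨r', hr'⟩ := ht.2 r
      show t * (r * x) ∈ primeRadicalSet R
      rw [← mul_assoc, hr', mul_assoc]
      exact hN'.mul_mem_left r' hx
    · simpa [J, mul_assoc] using hN'.mul_mem_right hx r
  have hJstable : ∀ y ∈ J, ∃ x ∈ J, t * y = x * t := fun y hy => by
    obtain ⟨x, hx⟩ := ht.2 y
    exact ⟨x, mul_mem_primeRadicalSet_comm ht (hx ▸ hy), hx⟩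
  have hJnil : IsNilpotentSet J k := fun y hy => by
    obtain ⟨x, hxJ, hxy⟩ := exists_pow_mul_prod_eq hJstable y hy
    refine (isLeftRegular_iff_right_eq_zero_of_mul.mp (hreg.pow k)) _ ?_
    rw [hxy]
    exact hN _ hxJ
  exact hJnil.subset_primeRadicalSet hJ h

theorem IsNormalElement.not_mem_of_mem_minPrimes (ht : IsNormalElement t)
    (hreg : IsLeftRegular t) {k : ℕ} (hN : IsNilpotentSet (primeRadicalSet R) k)
    (hfin : (minPrimes R).Finite) {p : Set R} (hp : p ∈ minPrimes R) : t ∉ p := by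
  intro htp
  set E := {q ∈ minPrimes R | t ∉ q}
  have hEp : ⋂₀ E ⊆ p := fun x hx => by
    refine ht.mem_primeRadicalSet_of_mul_mem hreg hN ?_ p hp.1
    rw [primeRadicalSet_eq_sInter_minPrimes]
    intro q hq
    by_cases htq : t ∈ q
    · exact hq.1.1.mul_mem_right htq x
    · exact hq.1.1.mul_mem_left t (hx q ⟨hq, htq⟩)
  obtain ⟨q, ⟨hq, htq⟩, hqp⟩ := hp.1.exists_subset_of_sInter_subset
    (hfin.subset fun q hq => hq.1) (fun q hq => hq.1.1.1) hEp
  exact htq (hp.2 q hq.1 hqp ▸ htp)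

end NormalElements

/-- The ideals whose extension `S⁻¹I` is a two-sided ideal contracting back to `I`. -/
structure IsSaturatedIdealSet {R : Type*} [Ring R] (S I : Set R) : Prop where
  isIdealSet : IsIdealSet I
  mem_of_mul_mem : ∀ s ∈ S, ∀ a, s * a ∈ I → a ∈ I
  exists_mul_eq : ∀ s ∈ S, ∀ a ∈ I, ∃ a' ∈ I, s * a = a' * s

section Saturated

variable {R : Type*} [Ring R] {S : Set R}

theorem IsSaturatedIdealSet.of_isNormalElement {I : Set R} (hI : IsIdealSet I)
    (hS : ∀ s ∈ S, IsNormalElement s) (hcancel : ∀ s ∈ S, ∀ a, s * a ∈ I → a ∈ I)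
    (hcomm : ∀ s ∈ S, ∀ x, x * s ∈ I → s * x ∈ I) : IsSaturatedIdealSet S I where
  isIdealSet := hI
  mem_of_mul_mem := hcancel
  exists_mul_eq s hs a ha := by
    obtain ⟨a', ha'⟩ := (hS s hs).2 a
    exact ⟨a', hcancel s hs a' (hcomm s hs a' (ha' ▸ hI.mul_mem_left s ha)), ha'⟩

theorem isSaturatedIdealSet_primeRadicalSet (hS : ∀ s ∈ S, IsNormalElement s)
    (hreg : ∀ s ∈ S, IsLeftRegular s) {k : ℕ} (hN : IsNilpotentSet (primeRadicalSet R) k) :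
    IsSaturatedIdealSet S (primeRadicalSet R) :=
  .of_isNormalElement isIdealSet_primeRadicalSet hS
    (fun s hs _ => (hS s hs).mem_primeRadicalSet_of_mul_mem (hreg s hs) hN)
    fun s hs _ => mul_mem_primeRadicalSet_comm (hS s hs)

theorem isSaturatedIdealSet_of_mem_minPrimes (hS : ∀ s ∈ S, IsNormalElement s)
    (hreg : ∀ s ∈ S, IsLeftRegular s) {k : ℕ} (hN : IsNilpotentSet (primeRadicalSet R) k)
    (hfin : (minPrimes R).Finite) {p : Set R} (hp : p ∈ minPrimes R) :
    IsSaturatedIdealSet S p :=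
  .of_isNormalElement hp.1.1 hS
    (fun s hs _ => hp.1.mem_of_mul_mem_left (hS s hs)
      ((hS s hs).not_mem_of_mem_minPrimes (hreg s hs) hN hfin hp))
    fun s hs _ => hp.1.mul_mem_comm (hS s hs)

end Saturated

section Fractions

variable {A X : Type*} [Ring A] [Ring X] (F : A →+* X) {s₁ a₁ s₂ a₂ u r : A} {x₁ x₂ : X}

theorem map_mul_eq_of_fractions (h₁ : F s₁ * x₁ = F a₁) (h₂ : F s₂ * x₁ = F a₂)
    (hu : u * s₁ = r * s₂) : F (u * a₁) = F (r * a₂) := by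
  rw [map_mul, ← h₁, ← mul_assoc, ← map_mul, hu, map_mul, mul_assoc, h₂, map_mul]

theorem map_mul_add_of_fractions (h₁ : F s₁ * x₁ = F a₁) (h₂ : F s₂ * x₂ = F a₂)
    (hu : u * s₁ = r * s₂) : F (u * s₁) * (x₁ + x₂) = F (u * a₁ + r * a₂) := by
  rw [mul_add, map_add]
  congr 1
  · rw [map_mul, mul_assoc, h₁, map_mul]
  · rw [hu, map_mul, mul_assoc, h₂, map_mul]

theorem map_mul_mul_of_fractions (h₁ : F s₁ * x₁ = F a₁) (h₂ : F s₂ * x₂ = F a₂)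
    (hu : u * a₁ = r * s₂) : F (u * s₁) * (x₁ * x₂) = F (r * a₂) := by
  rw [map_mul, mul_assoc, ← mul_assoc (F s₁), h₁, ← mul_assoc, ← map_mul, hu, map_mul, mul_assoc,
    h₂, map_mul]

end Fractions

section Localization

variable {A Q : Type*} [Ring A] [Ring Q] {S : Set A} {f : A →+* Q}

theorem IsLeftLocalization.exists_mul_eq_mul (hf : IsLeftLocalization S f) {y z : A}
    (h : f y = f z) : ∃ v ∈ S, v * y = v * z := by
  obtain ⟨v, hv, hvyz⟩ := (hf.ker (y - z)).mp (by rw [map_sub, h, sub_self])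
  exact ⟨v, hv, sub_eq_zero.mp (by rw [← mul_sub, hvyz])⟩

theorem IsLeftLocalization.mem_locSet_iff (hS : IsMulSet S) (hOre : LeftOre S)
    (hf : IsLeftLocalization S f) {I : Set A} (hI : IsSaturatedIdealSet S I) {q : Q} {s a : A}
    (hs : s ∈ S) (h : f s * q = f a) : q ∈ locSet f S I ↔ a ∈ I := by
  refine ⟨?_, fun ha => ⟨s, hs, a, ha, h⟩⟩
  rintro ⟨s', hs', a', ha', h'⟩
  obtain ⟨u, hu, r, hur⟩ := hOre s s' hs'
  obtain ⟨v, hv, hvur⟩ := hf.exists_mul_eq_mul (map_mul_eq_of_fractions f h h' hur)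
  refine hI.mem_of_mul_mem _ (hS.2.2 v hv u hu) a ?_
  rw [mul_assoc, hvur]
  exact hI.isIdealSet.mul_mem_left v (hI.isIdealSet.mul_mem_left r ha')

theorem IsLeftLocalization.preimage_locSet (hS : IsMulSet S) (hOre : LeftOre S)
    (hf : IsLeftLocalization S f) {I : Set A} (hI : IsSaturatedIdealSet S I) :
    f ⁻¹' locSet f S I = I :=
  Set.ext fun a => hf.mem_locSet_iff hS hOre hI hS.1 (by rw [map_one, one_mul])

theorem IsLeftLocalization.locSet_preimage (hf : IsLeftLocalization S f) {J : Set Q}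
    (hJ : IsIdealSet J) : locSet f S (f ⁻¹' J) = J := by
  refine subset_antisymm ?_ fun q hq => ?_
  · rintro q ⟨s, hs, a, ha, h⟩
    obtain ⟨w, hw⟩ := hf.isUnit s hs
    simpa [← h, ← hw, ← mul_assoc] using hJ.mul_mem_left (↑w⁻¹ : Q) ha
  · obtain ⟨s, hs, a, h⟩ := hf.surj q
    exact ⟨s, hs, a, show f a ∈ J from h ▸ hJ.mul_mem_left _ hq, h⟩

theorem locSet_mono {I J : Set A} (hIJ : I ⊆ J) : locSet f S I ⊆ locSet f S J :=
  fun _ ⟨s, hs, a, ha, h⟩ => ⟨s, hs, a, hIJ ha, h⟩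

theorem IsLeftLocalization.isIdealSet_locSet (hS : IsMulSet S) (hOre : LeftOre S)
    (hf : IsLeftLocalization S f) {I : Set A} (hI : IsIdealSet I)
    (hswap : ∀ s ∈ S, ∀ a ∈ I, ∃ a' ∈ I, s * a = a' * s) : IsIdealSet (locSet f S I) := by
  refine ⟨⟨1, hS.1, 0, hI.zero_mem, by simp⟩, ?_, ?_, ?_⟩
  · rintro q₁ ⟨s₁, hs₁, a₁, ha₁, h₁⟩ q₂ ⟨s₂, hs₂, a₂, ha₂, h₂⟩
    obtain ⟨u, hu, r, hur⟩ := hOre s₁ s₂ hs₂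
    exact ⟨u * s₁, hS.2.2 u hu s₁ hs₁, u * a₁ + r * a₂,
      hI.add_mem (hI.mul_mem_left u ha₁) (hI.mul_mem_left r ha₂),
      map_mul_add_of_fractions f h₁ h₂ hur⟩
  · rintro q ⟨s, hs, a, ha, h⟩
    exact ⟨s, hs, -a, hI.neg_mem ha, by rw [mul_neg, h, map_neg]⟩
  · rintro q ⟨s, hs, a, ha, h⟩ x
    obtain ⟨u, hu, b, hb⟩ := hf.surj x
    refine ⟨?_, ?_⟩
    · obtain ⟨u', hu', b', hb'⟩ := hOre b s hs
      exact ⟨u' * u, hS.2.2 u' hu' u hu, b' * a, hI.mul_mem_left b' ha,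
        map_mul_mul_of_fractions f hb h hb'⟩
    · obtain ⟨a', ha', hswap'⟩ := hswap u hu a ha
      exact ⟨u * s, hS.2.2 u hu s hs, a' * b, hI.mul_mem_right ha' b,
        map_mul_mul_of_fractions f h hb hswap'⟩

theorem IsLeftLocalization.locSet_sInter (hS : IsMulSet S) (hOre : LeftOre S)
    (hf : IsLeftLocalization S f) {E : Set (Set A)} (hE : ∀ I ∈ E, IsSaturatedIdealSet S I) :
    locSet f S (⋂₀ E) = ⋂₀ (locSet f S '' E) := by
  refine subset_antisymm ?_ fun q hq => ?_
  · rintro q hq _ ⟨I, hI, rfl⟩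
    exact locSet_mono (Set.sInter_subset_of_mem hI) hq
  · obtain ⟨s, hs, a, h⟩ := hf.surj q
    exact ⟨s, hs, a, fun I hI =>
      (hf.mem_locSet_iff hS hOre (hE I hI) hs h).mp (hq _ ⟨I, hI, rfl⟩), h⟩

theorem IsLeftLocalization.isPrimeIdealSet_locSet (hS : IsMulSet S) (hOre : LeftOre S)
    (hf : IsLeftLocalization S f) {P : Set A} (hP : IsPrimeIdealSet P)
    (hPS : IsSaturatedIdealSet S P) : IsPrimeIdealSet (locSet f S P) := by
  have hpre := hf.preimage_locSet hS hOre hPS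
  refine ⟨hf.isIdealSet_locSet hS hOre hP.1 hPS.exists_mul_eq, fun h => hP.one_not_mem ?_,
    fun X Y hX hY hXY => ?_⟩
  · rw [← hpre, h]
    trivial
  have hpreXY : ∀ a ∈ f ⁻¹' X, ∀ b ∈ f ⁻¹' Y, a * b ∈ P := fun a ha b hb => by
    rw [← hpre]
    simpa using hXY _ ha _ hb
  exact (hP.2.2 _ _ hX.preimage hY.preimage hpreXY).imp
    (fun h => hf.locSet_preimage hX ▸ locSet_mono h)
    (fun h => hf.locSet_preimage hY ▸ locSet_mono h)

theorem exists_mul_prod_eq_of_mem_locSet (hS : IsMulSet S) {I : Set A}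
    (hswap : ∀ s ∈ S, ∀ a ∈ I, ∃ a' ∈ I, s * a = a' * s) :
    ∀ {m : ℕ} (q : Fin m → Q), (∀ j, q j ∈ locSet f S I) →
      ∃ s ∈ S, ∃ a : Fin m → A, (∀ j, a j ∈ I) ∧ f s * (List.ofFn q).prod = f (List.ofFn a).prod
  | 0, _, _ => ⟨1, hS.1, Fin.elim0, fun j => j.elim0, by simp⟩
  | m + 1, q, hq => by
    obtain ⟨s₀, hs₀, a₀, ha₀, h₀⟩ := hq 0
    obtain ⟨s, hs, a, ha, h⟩ :=
      exists_mul_prod_eq_of_mem_locSet hS hswap (fun j => q j.succ) fun j => hq _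
    obtain ⟨a₀', ha₀', hswap₀⟩ := hswap s hs a₀ ha₀
    refine ⟨s * s₀, hS.2.2 s hs s₀ hs₀, Fin.cons a₀' a, Fin.cases ha₀' ha, ?_⟩
    simpa [List.ofFn_succ] using map_mul_mul_of_fractions f h₀ h hswap₀

theorem IsNilpotentSet.locSet (hS : IsMulSet S) (hf : IsLeftLocalization S f) {I : Set A}
    (hswap : ∀ s ∈ S, ∀ a ∈ I, ∃ a' ∈ I, s * a = a' * s) {k : ℕ} (hk : IsNilpotentSet I k) :
    IsNilpotentSet (locSet f S I) k := fun q hq => by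
  obtain ⟨s, hs, a, ha, h⟩ := exists_mul_prod_eq_of_mem_locSet hS hswap q hq
  rw [hk a ha, map_zero] at h
  exact (hf.isUnit s hs).mul_right_eq_zero.mp h

end Localization

section Lift

variable {A Q Q' : Type*} [Ring A] [Ring Q] [Ring Q'] {S : Set A} {f : A →+* Q}
  {ψ : A →+* Q'}

theorem IsLeftLocalization.map_eq_map (hf : IsLeftLocalization S f)
    (hψ : ∀ s ∈ S, IsUnit (ψ s)) {y z : A} (h : f y = f z) : ψ y = ψ z := by
  obtain ⟨v, hv, hvyz⟩ := hf.exists_mul_eq_mul h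
  exact (hψ v hv).mul_left_cancel (by rw [← map_mul, hvyz, map_mul])

/-- The value `ψ(s)⁻¹ ψ(a)` does not depend on the fraction `q = f(s)⁻¹ f(a)` chosen. -/
theorem IsLeftLocalization.mul_eq_of_fractions (hOre : LeftOre S) (hf : IsLeftLocalization S f)
    (hψ : ∀ s ∈ S, IsUnit (ψ s)) {q : Q} {s a s' a' : A} (hs : s ∈ S) (h : f s * q = f a)
    (h' : f s' * q = f a') {x : Q'} (hx : ψ s * x = ψ a) : ψ s' * x = ψ a' := by
  obtain ⟨u, hu, r, hur⟩ := hOre s' s hs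
  have hura := hf.map_eq_map hψ (map_mul_eq_of_fractions f h' h hur)
  refine (hψ u hu).mul_left_cancel ?_
  rw [← mul_assoc, ← map_mul, hur, map_mul, mul_assoc, hx, ← map_mul, ← hura, map_mul]

theorem IsLeftLocalization.exists_lift (hS : IsMulSet S) (hOre : LeftOre S)
    (hf : IsLeftLocalization S f) (hψ : ∀ s ∈ S, IsUnit (ψ s)) :
    ∃ φ : Q →+* Q', ∀ q s a, s ∈ S → f s * q = f a → ψ s * φ q = ψ a := by
  choose s hs a ha using hf.surj
  set φ₀ : Q → Q' := fun q => ↑(hψ _ (hs q)).unit⁻¹ * ψ (a q)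
  have hφ₀ : ∀ q, ψ (s q) * φ₀ q = ψ (a q) := fun q => by
    rw [← mul_assoc, (hψ _ (hs q)).mul_val_inv, one_mul]
  have spec : ∀ q s' a', s' ∈ S → f s' * q = f a' → ψ s' * φ₀ q = ψ a' :=
    fun q _ _ _ h => hf.mul_eq_of_fractions hOre hψ (hs q) (ha q) h (hφ₀ q)
  refine ⟨⟨⟨⟨φ₀, ?_⟩, fun q₁ q₂ => ?_⟩, ?_, fun q₁ q₂ => ?_⟩, spec⟩
  · simpa using spec 1 1 1 hS.1 (by simp)
  · obtain ⟨u, hu, r, hur⟩ := hOre (a q₁) (s q₂) (hs q₂)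
    have hus := hS.2.2 u hu _ (hs q₁)
    refine (hψ _ hus).mul_left_cancel ?_
    rw [spec _ _ _ hus (map_mul_mul_of_fractions f (ha q₁) (ha q₂) hur),
      map_mul_mul_of_fractions ψ (hφ₀ q₁) (hφ₀ q₂) hur]
  · simpa using spec 0 1 0 hS.1 (by simp)
  · obtain ⟨u, hu, r, hur⟩ := hOre (s q₁) (s q₂) (hs q₂)
    have hus := hS.2.2 u hu _ (hs q₁)
    refine (hψ _ hus).mul_left_cancel ?_
    rw [spec _ _ _ hus (map_mul_add_of_fractions f (ha q₁) (ha q₂) hur),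
      map_mul_add_of_fractions ψ (hφ₀ q₁) (hφ₀ q₂) hur]

end Lift

section Denominators

variable {R : Type*} [Ring R] {T : Set R}

theorem leftOre_of_isNormalElement (hT : ∀ t ∈ T, IsNormalElement t) : LeftOre T :=
  fun r s hs => ⟨s, hs, (hT s hs).2 r⟩

theorem rightOre_of_isNormalElement (hT : ∀ t ∈ T, IsNormalElement t) : RightOre T :=
  fun r s hs => ⟨s, hs, (hT s hs).1 r⟩

theorem IsMulSet.isLeftDenominatorSet (hT : IsMulSet T) (hn : ∀ t ∈ T, IsNormalElement t)
    (hreg : ∀ t ∈ T, IsRightRegular t) : IsLeftDenominatorSet T :=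
  ⟨hT, leftOre_of_isNormalElement hn, fun r t ht h =>
    ⟨1, hT.1, by rw [one_mul]; exact isRightRegular_iff_left_eq_zero_of_mul.mp (hreg t ht) r h⟩⟩

theorem IsMulSet.isRightDenominatorSet (hT : IsMulSet T) (hn : ∀ t ∈ T, IsNormalElement t)
    (hreg : ∀ t ∈ T, IsLeftRegular t) : IsRightDenominatorSet T :=
  ⟨hT, rightOre_of_isNormalElement hn, fun r t ht h =>
    ⟨1, hT.1, by rw [mul_one]; exact isLeftRegular_iff_right_eq_zero_of_mul.mp (hreg t ht) r h⟩⟩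

theorem lAss_eq_singleton_zero (hT : IsMulSet T) (hreg : ∀ t ∈ T, IsLeftRegular t) :
    lAss T = {0} :=
  subset_antisymm (fun _ ⟨t, ht, h⟩ => isLeftRegular_iff_right_eq_zero_of_mul.mp (hreg t ht) _ h)
    (Set.singleton_subset_iff.mpr ⟨1, hT.1, mul_zero 1⟩)

structure IsRegularNormalSet (T : Set R) : Prop where
  isMulSet : IsMulSet T
  isNormalElement : ∀ t ∈ T, IsNormalElement t
  isLeftRegular : ∀ t ∈ T, IsLeftRegular t

theorem IsRegularNormalSet.leftOre (hT : IsRegularNormalSet T) : LeftOre T :=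
  leftOre_of_isNormalElement hT.isNormalElement

end Denominators

section RegularNormal

variable {A Q : Type*} [Ring A] [Ring Q] {T : Set A} {f : A →+* Q} {k : ℕ}

theorem IsRegularNormalSet.preimage_locSet (hT : IsRegularNormalSet T)
    (hN : IsNilpotentSet (primeRadicalSet A) k) (hfin : (minPrimes A).Finite)
    (hf : IsLeftLocalization T f) {p : Set A} (hp : p ∈ minPrimes A) : f ⁻¹' locSet f T p = p :=
  hf.preimage_locSet hT.isMulSet hT.leftOre
    (isSaturatedIdealSet_of_mem_minPrimes hT.isNormalElement hT.isLeftRegular hN hfin hp)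

theorem IsRegularNormalSet.isPrimeIdealSet_locSet (hT : IsRegularNormalSet T)
    (hN : IsNilpotentSet (primeRadicalSet A) k) (hfin : (minPrimes A).Finite)
    (hf : IsLeftLocalization T f) {p : Set A} (hp : p ∈ minPrimes A) :
    IsPrimeIdealSet (locSet f T p) :=
  hf.isPrimeIdealSet_locSet hT.isMulSet hT.leftOre hp.1
    (isSaturatedIdealSet_of_mem_minPrimes hT.isNormalElement hT.isLeftRegular hN hfin hp)

theorem IsRegularNormalSet.locSet_primeRadicalSet (hT : IsRegularNormalSet T)
    (hN : IsNilpotentSet (primeRadicalSet A) k) (hfin : (minPrimes A).Finite)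
    (hf : IsLeftLocalization T f) : locSet f T (primeRadicalSet A) = primeRadicalSet Q := by
  have hNT := isSaturatedIdealSet_primeRadicalSet hT.isNormalElement hT.isLeftRegular hN
  have hpT : ∀ p ∈ minPrimes A, IsSaturatedIdealSet T p := fun _ =>
    isSaturatedIdealSet_of_mem_minPrimes hT.isNormalElement hT.isLeftRegular hN hfin
  refine subset_antisymm ?_ fun q hq => ?_
  · exact (hN.locSet hT.isMulSet hf hNT.exists_mul_eq).subset_primeRadicalSet
      (hf.isIdealSet_locSet hT.isMulSet hT.leftOre hNT.isIdealSet hNT.exists_mul_eq)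
  rw [primeRadicalSet_eq_sInter_minPrimes, hf.locSet_sInter hT.isMulSet hT.leftOre hpT]
  rintro _ ⟨p, hp, rfl⟩
  exact hq _ (hT.isPrimeIdealSet_locSet hN hfin hf hp)

theorem IsRegularNormalSet.exists_locSet_subset (hT : IsRegularNormalSet T)
    (hN : IsNilpotentSet (primeRadicalSet A) k) (hfin : (minPrimes A).Finite)
    (hf : IsLeftLocalization T f) {J : Set Q} (hJ : IsPrimeIdealSet J) :
    ∃ p ∈ minPrimes A, locSet f T p ⊆ J := by
  have hpT : ∀ p ∈ minPrimes A, IsSaturatedIdealSet T p := fun _ =>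
    isSaturatedIdealSet_of_mem_minPrimes hT.isNormalElement hT.isLeftRegular hN hfin
  have hsub : ⋂₀ (locSet f T '' minPrimes A) ⊆ J := by
    rw [← hf.locSet_sInter hT.isMulSet hT.leftOre hpT, ← primeRadicalSet_eq_sInter_minPrimes,
      hT.locSet_primeRadicalSet hN hfin hf]
    exact fun q hq => hq J hJ
  have hideal : ∀ I ∈ locSet f T '' minPrimes A, IsIdealSet I := by
    rintro _ ⟨p, hp, rfl⟩
    exact (hT.isPrimeIdealSet_locSet hN hfin hf hp).1
  obtain ⟨_, ⟨p, hp, rfl⟩, hpJ⟩ := hJ.exists_subset_of_sInter_subset (hfin.image _) hideal hsub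
  exact ⟨p, hp, hpJ⟩

theorem IsRegularNormalSet.minPrimes_eq_image_locSet (hT : IsRegularNormalSet T)
    (hN : IsNilpotentSet (primeRadicalSet A) k) (hfin : (minPrimes A).Finite)
    (hf : IsLeftLocalization T f) : minPrimes Q = locSet f T '' minPrimes A := by
  refine subset_antisymm (fun J hJ => ?_) ?_
  · obtain ⟨p, hp, hpJ⟩ := hT.exists_locSet_subset hN hfin hf hJ.1
    exact ⟨p, hp, hJ.2 _ (hT.isPrimeIdealSet_locSet hN hfin hf hp) hpJ⟩
  rintro _ ⟨p, hp, rfl⟩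
  refine ⟨hT.isPrimeIdealSet_locSet hN hfin hf hp, fun J hJ hJp => subset_antisymm hJp ?_⟩
  obtain ⟨p', hp', hp'J⟩ := hT.exists_locSet_subset hN hfin hf hJ
  have hp'p : p' ⊆ p := by
    rw [← hT.preimage_locSet hN hfin hf hp', ← hT.preimage_locSet hN hfin hf hp]
    exact Set.preimage_mono (hp'J.trans hJp)
  exact hp.2 p' hp'.1 hp'p ▸ hp'J

theorem IsRegularNormalSet.injOn_locSet_minPrimes (hT : IsRegularNormalSet T)
    (hN : IsNilpotentSet (primeRadicalSet A) k) (hfin : (minPrimes A).Finite)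
    (hf : IsLeftLocalization T f) : Set.InjOn (locSet f T) (minPrimes A) := by
  intro p₁ hp₁ p₂ hp₂ h
  rw [← hT.preimage_locSet hN hfin hf hp₁, ← hT.preimage_locSet hN hfin hf hp₂, h]

end RegularNormal

section Quotient

variable {A Q B Q' : Type*} [Ring A] [Ring Q] [Ring B] [Ring Q'] {T : Set A} {f : A →+* Q}
  {k : ℕ} {h : A →+* B}

theorem IsNilpotentSet.one_not_mem {I : Set A} (hk : IsNilpotentSet I k) (h10 : (1 : A) ≠ 0) :
    (1 : A) ∉ I := fun h1 =>
  h10 (by simpa [List.ofFn_const] using hk (fun _ => 1) fun _ => h1)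

theorem isRegular_map_of_mul_mem (hh : Function.Surjective h) {I : Set A}
    (hker : ∀ a, h a = 0 ↔ a ∈ I) {t : A} (hl : ∀ a, t * a ∈ I → a ∈ I)
    (hr : ∀ a, a * t ∈ I → a ∈ I) : IsRegular (h t) := by
  refine isRegular_iff_eq_zero_of_mul.mpr ⟨fun b hb => ?_, fun b hb => ?_⟩ <;>
    obtain ⟨a, rfl⟩ := hh b <;> rw [← map_mul, hker] at hb <;> rw [hker]
  exacts [hl a hb, hr a hb]

theorem IsRegularNormalSet.isRegular_map (hT : IsRegularNormalSet T)
    (hN : IsNilpotentSet (primeRadicalSet A) k) (hh : Function.Surjective h)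
    (hker : ∀ a, h a = 0 ↔ a ∈ primeRadicalSet A) {t : A} (ht : t ∈ T) : IsRegular (h t) := by
  have hNT := isSaturatedIdealSet_primeRadicalSet hT.isNormalElement hT.isLeftRegular hN
  exact isRegular_map_of_mul_mem hh hker (hNT.mem_of_mul_mem t ht)
    fun a ha =>
      hNT.mem_of_mul_mem t ht a (mul_mem_primeRadicalSet_comm (hT.isNormalElement t ht) ha)

theorem IsRegularNormalSet.isMulSet_image (hT : IsRegularNormalSet T)
    (hN : IsNilpotentSet (primeRadicalSet A) k) (hker : ∀ a, h a = 0 ↔ a ∈ primeRadicalSet A) :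
    IsMulSet (h '' T) := by
  refine ⟨⟨1, hT.isMulSet.1, map_one h⟩, ?_, ?_⟩
  · rintro ⟨t, ht, h0⟩
    have hNT := isSaturatedIdealSet_primeRadicalSet hT.isNormalElement hT.isLeftRegular hN
    refine hN.one_not_mem (fun h10 => hT.isMulSet.2.1 (h10 ▸ hT.isMulSet.1)) ?_
    exact hNT.mem_of_mul_mem t ht 1 (by simpa [hker] using h0)
  · rintro _ ⟨t, ht, rfl⟩ _ ⟨t', ht', rfl⟩
    exact ⟨t * t', hT.isMulSet.2.2 t ht t' ht', map_mul h t t'⟩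

theorem IsRegularNormalSet.denominatorSet_image (hT : IsRegularNormalSet T)
    (hN : IsNilpotentSet (primeRadicalSet A) k) (hh : Function.Surjective h)
    (hker : ∀ a, h a = 0 ↔ a ∈ primeRadicalSet A) :
    IsLeftDenominatorSet (h '' T) ∧ IsRightDenominatorSet (h '' T) ∧ lAss (h '' T) = {0} := by
  have hmul := hT.isMulSet_image hN hker
  have hn : ∀ b ∈ h '' T, IsNormalElement b := by
    rintro _ ⟨t, ht, rfl⟩
    exact (hT.isNormalElement t ht).map hh
  have hreg : ∀ b ∈ h '' T, IsRegular b := by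
    rintro _ ⟨t, ht, rfl⟩
    exact hT.isRegular_map hN hh hker ht
  exact ⟨hmul.isLeftDenominatorSet hn fun b hb => (hreg b hb).2,
    hmul.isRightDenominatorSet hn fun b hb => (hreg b hb).1,
    lAss_eq_singleton_zero hmul fun b hb => (hreg b hb).1⟩

theorem IsRegularNormalSet.exists_lift_quotient (hT : IsRegularNormalSet T)
    (hN : IsNilpotentSet (primeRadicalSet A) k) (hfin : (minPrimes A).Finite)
    (hf : IsLeftLocalization T f) (hh : Function.Surjective h)
    (hker : ∀ a, h a = 0 ↔ a ∈ primeRadicalSet A) {f' : B →+* Q'}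
    (hf' : IsLeftLocalization (h '' T) f') :
    ∃ φ : Q →+* Q', Function.Surjective φ ∧ (∀ q, φ q = 0 ↔ q ∈ primeRadicalSet Q) ∧
      ∀ a, φ (f a) = f' (h a) := by
  have hunit : ∀ t ∈ T, IsUnit (f'.comp h t) := fun t ht => hf'.isUnit _ ⟨t, ht, rfl⟩
  obtain ⟨φ, hφ⟩ := hf.exists_lift hT.isMulSet hT.leftOre hunit
  simp only [RingHom.comp_apply] at hunit hφ
  refine ⟨φ, fun q' => ?_, fun q => ?_,
    fun a => by simpa using hφ (f a) 1 a hT.isMulSet.1 (by simp)⟩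
  · obtain ⟨_, ⟨t, ht, rfl⟩, b, hb⟩ := hf'.surj q'
    obtain ⟨a, rfl⟩ := hh b
    obtain ⟨w, hw⟩ := hf.isUnit t ht
    refine ⟨↑w⁻¹ * f a, (hunit t ht).mul_left_cancel ?_⟩
    rw [hφ _ t a ht (by rw [← hw, Units.mul_inv_cancel_left]), hb]
  · obtain ⟨s, hs, a, ha⟩ := hf.surj q
    rw [← hT.locSet_primeRadicalSet hN hfin hf, hf.mem_locSet_iff hT.isMulSet hT.leftOre
      (isSaturatedIdealSet_primeRadicalSet hT.isNormalElement hT.isLeftRegular hN) hs ha,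
      ← hker, ← (hunit s hs).mul_right_eq_zero, hφ q s a hs ha, (hf'.ker _),
      (hT.denominatorSet_image hN hh hker).2.2, Set.mem_singleton_iff]

end Quotient

universe u v w

theorem statement10_general {R : Type*} [Ring R]
    {S : Set R} (hnormal : ∀ s ∈ S, IsNormalElement s)
    (hfin : {p : Set R | IsMinimalPrimeOver (twoSidedAss S) p}.Finite)
    (A : Type u) [Ring A] (g : R →+* A) (hg : Function.Surjective g)
    (hgker : ∀ r : R, g r = 0 ↔ r ∈ twoSidedAss S)
    (hden : IsLeftDenominatorSet (g '' S) ∧ IsRightDenominatorSet (g '' S) ∧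
      lAss (g '' S) = ({0} : Set A))
    (hnil : ∃ k : ℕ, 1 ≤ k ∧ ∀ x : Fin k → A,
      (∀ i, x i ∈ primeRadicalSet A) → (List.ofFn x).prod = 0)
    {Q : Type*} [Ring Q] (f : A →+* Q) (hf : IsLeftLocalization (g '' S) f) :
    (minPrimes Q =
        (fun p : Set R => locSet f (g '' S) (g '' p)) ''
          {p : Set R | IsMinimalPrimeOver (twoSidedAss S) p} ∧
      Set.InjOn (fun p : Set R => locSet f (g '' S) (g '' p))
        {p : Set R | IsMinimalPrimeOver (twoSidedAss S) p}) ∧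
    locSet f (g '' S) (primeRadicalSet A) = primeRadicalSet Q ∧
    ∀ (B : Type v) [Ring B],
      ∀ h : A →+* B, Function.Surjective h →
        (∀ a : A, h a = 0 ↔ a ∈ primeRadicalSet A) →
        (IsLeftDenominatorSet (h '' (g '' S)) ∧
          IsRightDenominatorSet (h '' (g '' S)) ∧
          lAss (h '' (g '' S)) = ({0} : Set B)) ∧
        ∀ (Q' : Type w) [Ring Q'],
          ∀ f' : B →+* Q', IsLeftLocalization (h '' (g '' S)) f' →
            ∃ φ : Q →+* Q', Function.Surjective φ ∧
              (∀ q : Q, φ q = 0 ↔ q ∈ primeRadicalSet Q) ∧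
              ∀ a : A, φ (f a) = f' (h a) := by
  obtain ⟨⟨hmul, -⟩, -, hAss⟩ := hden
  obtain ⟨k, -, hN⟩ := hnil
  have hT : IsRegularNormalSet (g '' S) := by
    refine ⟨hmul, ?_, fun t ht => isLeftRegular_iff_right_eq_zero_of_mul.mpr fun x hx => ?_⟩
    · rintro _ ⟨s, hs, rfl⟩
      exact (hnormal s hs).map hg
    · have hx' : x ∈ lAss (g '' S) := ⟨t, ht, hx⟩
      rwa [hAss] at hx'
  have hcorr := minPrimes_eq_image_of_surjective hg hgker
  have hfinA : (minPrimes A).Finite := hcorr ▸ hfin.image _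
  refine ⟨⟨?_, ?_⟩, hT.locSet_primeRadicalSet hN hfinA hf, fun B _ h hh hker =>
    ⟨hT.denominatorSet_image hN hh hker, fun Q' _ f' hf' =>
      hT.exists_lift_quotient hN hfinA hf hh hker hf'⟩⟩
  · rw [hT.minPrimes_eq_image_locSet hN hfinA hf, hcorr, Set.image_image]
  · exact (hT.injOn_locSet_minPrimes hN hfinA hf).comp (injOn_image_minimalPrimeOver hgker)
      fun p hp => hcorr ▸ ⟨p, hp, rfl⟩

/-- In the setting of Statement 9, assume moreover that the
prime radical `𝔫_{R̄}` of `R̄` is a nilpotent ideal.  Then: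
(1) `𝔭 ↦ S̄⁻¹π(𝔭)` is a bijection of `min(𝔞)` onto `min(S̄⁻¹R̄)`, i.e.
`min(R⟨S⁻¹⟩) = { S̄⁻¹π(𝔭) | 𝔭 ∈ min(𝔞) }`; (2) `S̄⁻¹𝔫_{R̄} = 𝔫_{S̄⁻¹R̄}`
and `S̄⁻¹R̄ / S̄⁻¹𝔫_{R̄} ≅ S̄⁻¹R̄ / 𝔫_{S̄⁻¹R̄} ≅ S̃⁻¹R̃`, where `S̃`, the
image of `S̄` in `R̃ = R̄/𝔫_{R̄}`, is a (left and right) denominator set of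
`R̃` with zero assassinator. -/
theorem statement10 {R : Type*} [Ring R]
    {S : Set R} (hSmul : IsMulSet S) (hnormal : ∀ s ∈ S, IsNormalElement s)
    (hfin : {p : Set R | IsMinimalPrimeOver (twoSidedAss S) p}.Finite)
    (A : Type u) [Ring A] (g : R →+* A) (hg : Function.Surjective g)
    (hgker : ∀ r : R, g r = 0 ↔ r ∈ twoSidedAss S)
    (hden : IsLeftDenominatorSet (g '' S) ∧ IsRightDenominatorSet (g '' S) ∧
      lAss (g '' S) = ({0} : Set A))
    (hnil : ∃ k : ℕ, 1 ≤ k ∧ ∀ x : Fin k → A,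
      (∀ i, x i ∈ primeRadicalSet A) → (List.ofFn x).prod = 0)
    {Q : Type*} [Ring Q] (f : A →+* Q) (hf : IsLeftLocalization (g '' S) f) :
    (minPrimes Q =
        (fun p : Set R => locSet f (g '' S) (g '' p)) ''
          {p : Set R | IsMinimalPrimeOver (twoSidedAss S) p} ∧
      Set.InjOn (fun p : Set R => locSet f (g '' S) (g '' p))
        {p : Set R | IsMinimalPrimeOver (twoSidedAss S) p}) ∧
    locSet f (g '' S) (primeRadicalSet A) = primeRadicalSet Q ∧
    ∀ (B : Type v) [Ring B],
      ∀ h : A →+* B, Function.Surjective h →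
        (∀ a : A, h a = 0 ↔ a ∈ primeRadicalSet A) →
        (IsLeftDenominatorSet (h '' (g '' S)) ∧
          IsRightDenominatorSet (h '' (g '' S)) ∧
          lAss (h '' (g '' S)) = ({0} : Set B)) ∧
        ∀ (Q' : Type w) [Ring Q'],
          ∀ f' : B →+* Q', IsLeftLocalization (h '' (g '' S)) f' →
            ∃ φ : Q →+* Q', Function.Surjective φ ∧
              (∀ q : Q, φ q = 0 ↔ q ∈ primeRadicalSet Q) ∧
              ∀ a : A, φ (f a) = f' (h a) :=
  statement10_general hnormal hfin A g hg hgker hden hnil f hf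

end BavulaMinPrimes
end

section
/- Let R be a ring and S ∈ Den_l(R, 𝔮) a left denominator set such that 𝔮 = ass_l(S) is a prime ideal of R. Then the left localization S⁻¹R is a prime ring. -/
/- Common framework: two-sided ideals, prime ideals, denominator sets and
   left localizations of (possibly noncommutative) rings, described
   axiomatically via their characteristic properties. -/

namespace BavulaMinPrimes

/-! Ideals of `S⁻¹R` are detected by their preimages in `R`: if `α = s⁻¹r` lies in an ideal
`A`, then so does `f r = f s * α`, and `f r = 0` forces `α = 0`. Hence an ideal whose preimage
lies in `ker f = ass_l(S)` is zero, and primality of `ass_l(S)` transfers to the zero ideal. -/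

theorem IsIdealSet.preimage_s14 {R Q : Type*} [Ring R] [Ring Q] (f : R →+* Q) {A : Set Q}
    (hA : IsIdealSet A) : IsIdealSet (f ⁻¹' A) := by
  obtain ⟨h0, hadd, hneg, hmul⟩ := hA
  refine ⟨by simpa using h0, fun a ha b hb ↦ ?_, fun a ha ↦ ?_, fun a ha r ↦ ?_⟩
  · simpa using hadd _ ha _ hb
  · simpa using hneg _ ha
  · simpa using hmul _ ha (f r)

theorem isIdealSet_zero (R : Type*) [Ring R] : IsIdealSet ({0} : Set R) := by
  refine ⟨rfl, ?_, ?_, ?_⟩ <;> simp +contextual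

theorem IsIdealSet.eq_univ_of_one_mem {R : Type*} [Ring R] {I : Set R} (hI : IsIdealSet I)
    (h1 : (1 : R) ∈ I) : I = Set.univ :=
  Set.eq_univ_of_forall fun r ↦ by simpa using (hI.2.2.2 1 h1 r).2

namespace IsLeftLocalization

variable {R Q : Type*} [Ring R] [Ring Q] {S : Set R} {f : R →+* Q}

theorem subset_zero_of_preimage_subset (hf : IsLeftLocalization S f) {A : Set Q}
    (hA : IsIdealSet A) (hAS : f ⁻¹' A ⊆ lAss S) : A ⊆ {0} := by
  intro α hα
  obtain ⟨s, hs, r, hr⟩ := hf.surj α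
  have hrA : f r ∈ A := hr ▸ (hA.2.2.2 α hα (f s)).1
  have hr0 : f r = 0 := (hf.ker r).2 (hAS hrA)
  exact (hf.isUnit s hs).mul_left_cancel (by rw [hr, hr0, mul_zero])

theorem isPrimeRing (hf : IsLeftLocalization S f) (hS : IsPrimeIdealSet (lAss S)) :
    IsPrimeRing Q := by
  obtain ⟨hSideal, hSne, hSprime⟩ := hS
  refine ⟨isIdealSet_zero Q, fun h ↦ hSne ?_, fun A B hA hB hAB ↦ ?_⟩
  · have h1 : f 1 = 0 := by simpa [← h] using Set.mem_univ (1 : Q)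
    exact hSideal.eq_univ_of_one_mem ((hf.ker 1).1 h1)
  · have hpre : ∀ a ∈ f ⁻¹' A, ∀ b ∈ f ⁻¹' B, a * b ∈ lAss S := fun a ha b hb ↦
      (hf.ker _).1 (by simpa using hAB (f a) ha (f b) hb)
    exact (hSprime _ _ (hA.preimage_s14 f) (hB.preimage_s14 f) hpre).imp
      (hf.subset_zero_of_preimage_subset hA) (hf.subset_zero_of_preimage_subset hB)

end IsLeftLocalization

theorem statement14_general {R Q : Type*} [Ring R] [Ring Q]
    {S : Set R}
    {q : Set R} (hq : IsPrimeIdealSet q) (hass : lAss S = q)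
    (f : R →+* Q) (hf : IsLeftLocalization S f) :
    IsPrimeRing Q :=
  hf.isPrimeRing (hass ▸ hq)

/-- If `S ∈ Den_l(R, 𝔮)` with `𝔮 = ass_l(S)` a prime ideal of
`R`, then the left localization `S⁻¹R` is a prime ring. -/
theorem statement14 {R Q : Type*} [Ring R] [Ring Q]
    {S : Set R} (hS : IsLeftDenominatorSet S)
    {q : Set R} (hq : IsPrimeIdealSet q) (hass : lAss S = q)
    (f : R →+* Q) (hf : IsLeftLocalization S f) :
    IsPrimeRing Q :=
  statement14_general hq hass f hf

end BavulaMinPrimes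
end
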